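/- arXiv:1603.00781 — 4 statements merged into one kernel-verified Lean document; each statement's English description precedes it below -/
import Mathlib

section
/- Let σ ∈ {1, -1} and let q : ℝ² → ℂ be a smooth function of (x,t) such that 1 + σ|q_x|² > 0 everywhere and q satisfies the generalized complex short pulse equation q_{xt} + q + (σ/2)(|q|² q_x)_x = 0. Then the conservation law ∂_t(√(1 + σ|q_x|²)) + (σ/2) ∂_x(|q|² √(1 + σ|q_x|²)) = 0 holds identically. -/
noncomputable section

/-- Partial derivative with respect to the first variable. -/
def pd1 {E : Type*} [NormedAddCommGroup E] [NormedSpace ℝ E] (F : ℝ → ℝ → E) (x t : ℝ) : E :=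
  deriv (fun u => F u t) x

/-- Partial derivative with respect to the second variable. -/
def pd2 {E : Type*} [NormedAddCommGroup E] [NormedSpace ℝ E] (F : ℝ → ℝ → E) (x t : ℝ) : E :=
  deriv (fun v => F x v) t

lemma norm_sq_re_im (z : ℂ) : ‖z‖ ^ 2 = z.re * z.re + z.im * z.im := by
  rw [← Complex.normSq_apply, ← Complex.sq_norm]

lemma hasDerivAt_norm_sq {f : ℝ → ℂ} {f' : ℂ} {u : ℝ} (hf : HasDerivAt f f' u) :
    HasDerivAt (fun s => ‖f s‖ ^ 2) (2 * ((f u).re * f'.re + (f u).im * f'.im)) u := by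
  have hre : HasDerivAt (fun s => (f s).re) f'.re u :=
    Complex.reCLM.hasFDerivAt.comp_hasDerivAt u hf
  have him : HasDerivAt (fun s => (f s).im) f'.im u :=
    Complex.imCLM.hasFDerivAt.comp_hasDerivAt u hf
  have h := (hre.mul hre).add (him.mul him)
  refine (h.congr_of_eventuallyEq (Filter.Eventually.of_forall fun s => ?_)).congr_deriv ?_
  · show ‖f s‖ ^ 2 = (f s).re * (f s).re + (f s).im * (f s).im
    exact norm_sq_re_im (f s)
  · ring

lemma final_algebra (σ s X P R B N : ℝ) (hs : s ≠ 0) (hm : s * s = 1 + σ * N)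
    (hkey : X = -(P * (1 + σ * N)) - σ / 2 * B * R) :
    1 / (2 * s) * (σ * (2 * X)) + σ / 2 * (B * (1 / (2 * s) * (σ * (2 * R))) + 2 * P * s) = 0 := by
  subst hkey
  have h3 : s ^ 3 = s * (1 + σ * N) := by rw [pow_succ, pow_two, hm]; ring
  field_simp
  linear_combination (2 * σ * P) * hm

/-- conservation law of the generalized complex short pulse equation
`q_{xt} + q + (σ/2)(|q|² q_x)_x = 0`. -/
theorem csp_conservation_law (σ : ℝ) (hσ : σ = 1 ∨ σ = -1)
    (q : ℝ → ℝ → ℂ) (hq : ContDiff ℝ (⊤ : ℕ∞) (Function.uncurry q))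
    (hpos : ∀ x t : ℝ, 0 < 1 + σ * ‖pd1 q x t‖ ^ 2)
    (hCSP : ∀ x t : ℝ,
      pd2 (pd1 q) x t + q x t
        + ((σ : ℂ) / 2) * pd1 (fun u v => ((‖q u v‖ ^ 2 : ℝ) : ℂ) * pd1 q u v) x t = 0) :
    ∀ x t : ℝ,
      pd2 (fun u v => Real.sqrt (1 + σ * ‖pd1 q u v‖ ^ 2)) x t
        + (σ / 2) * pd1 (fun u v => ‖q u v‖ ^ 2 * Real.sqrt (1 + σ * ‖pd1 q u v‖ ^ 2)) x t
        = 0 := by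
  intro x t
  set G : ℝ × ℝ → ℂ := fun p => fderiv ℝ (Function.uncurry q) p (1, 0) with hGdef
  have hG : ContDiff ℝ (⊤ : ℕ∞) G := (hq.fderiv_right (by simp)).clm_apply contDiff_const
  have hq_u : ∀ u v : ℝ, HasDerivAt (fun u' => q u' v) (G (u, v)) u := by
    intro u v
    have hcurve : HasDerivAt (fun u' : ℝ => (u', v)) ((1 : ℝ), (0 : ℝ)) u :=
      (hasDerivAt_id u).prodMk (hasDerivAt_const u v)
    exact (hq.differentiable (by simp) (u, v)).hasFDerivAt.comp_hasDerivAt u hcurve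
  have hpd1 : ∀ u v, pd1 q u v = G (u, v) := fun u v => (hq_u u v).deriv
  have hG_u : ∀ u v : ℝ, HasDerivAt (fun u' => G (u', v)) (fderiv ℝ G (u, v) (1, 0)) u := by
    intro u v
    have hcurve : HasDerivAt (fun u' : ℝ => (u', v)) ((1 : ℝ), (0 : ℝ)) u :=
      (hasDerivAt_id u).prodMk (hasDerivAt_const u v)
    exact (hG.differentiable (by simp) (u, v)).hasFDerivAt.comp_hasDerivAt u hcurve
  have hG_v : ∀ u v : ℝ, HasDerivAt (fun v' => G (u, v')) (fderiv ℝ G (u, v) (0, 1)) v := by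
    intro u v
    have hcurve : HasDerivAt (fun v' : ℝ => (u, v')) ((0 : ℝ), (1 : ℝ)) v :=
      (hasDerivAt_const v u).prodMk (hasDerivAt_id v)
    exact (hG.differentiable (by simp) (u, v)).hasFDerivAt.comp_hasDerivAt v hcurve
  have hpos' : ∀ u v : ℝ, 0 < 1 + σ * ‖G (u, v)‖ ^ 2 := by
    intro u v; rw [← hpd1]; exact hpos u v
  -- abbreviations (plain terms)
  have hsne : Real.sqrt (1 + σ * ‖G (x, t)‖ ^ 2) ≠ 0 :=
    ne_of_gt (Real.sqrt_pos.mpr (hpos' x t))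
  have hss : Real.sqrt (1 + σ * ‖G (x, t)‖ ^ 2) * Real.sqrt (1 + σ * ‖G (x, t)‖ ^ 2)
      = 1 + σ * ‖G (x, t)‖ ^ 2 := Real.mul_self_sqrt (le_of_lt (hpos' x t))
  -- t-derivative of sqrt term
  have h1 : HasDerivAt (fun v => Real.sqrt (1 + σ * ‖G (x, v)‖ ^ 2))
      (1 / (2 * Real.sqrt (1 + σ * ‖G (x, t)‖ ^ 2)) *
        (σ * (2 * ((G (x, t)).re * (fderiv ℝ G (x, t) (0, 1)).re
          + (G (x, t)).im * (fderiv ℝ G (x, t) (0, 1)).im)))) t := by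
    have ha : HasDerivAt (fun v => ‖G (x, v)‖ ^ 2)
        (2 * ((G (x, t)).re * (fderiv ℝ G (x, t) (0, 1)).re
          + (G (x, t)).im * (fderiv ℝ G (x, t) (0, 1)).im)) t :=
      hasDerivAt_norm_sq (hG_v x t)
    have hmm := (ha.const_mul σ).const_add 1
    exact (Real.hasDerivAt_sqrt (ne_of_gt (hpos' x t))).comp t hmm
  have e1 : pd2 (fun u v => Real.sqrt (1 + σ * ‖pd1 q u v‖ ^ 2)) x t
      = 1 / (2 * Real.sqrt (1 + σ * ‖G (x, t)‖ ^ 2)) *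
        (σ * (2 * ((G (x, t)).re * (fderiv ℝ G (x, t) (0, 1)).re
          + (G (x, t)).im * (fderiv ℝ G (x, t) (0, 1)).im))) := by
    have hfun : (fun v => Real.sqrt (1 + σ * ‖pd1 q x v‖ ^ 2))
        = fun v => Real.sqrt (1 + σ * ‖G (x, v)‖ ^ 2) := by
      funext v; rw [hpd1]
    simp only [pd2]
    rw [hfun]
    exact h1.deriv
  -- x-derivatives
  have hb : HasDerivAt (fun u => ‖q u t‖ ^ 2)
      (2 * ((q x t).re * (G (x, t)).re + (q x t).im * (G (x, t)).im)) x :=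
    hasDerivAt_norm_sq (hq_u x t)
  have hsx : HasDerivAt (fun u => Real.sqrt (1 + σ * ‖G (u, t)‖ ^ 2))
      (1 / (2 * Real.sqrt (1 + σ * ‖G (x, t)‖ ^ 2)) *
        (σ * (2 * ((G (x, t)).re * (fderiv ℝ G (x, t) (1, 0)).re
          + (G (x, t)).im * (fderiv ℝ G (x, t) (1, 0)).im)))) x := by
    have ha : HasDerivAt (fun u => ‖G (u, t)‖ ^ 2)
        (2 * ((G (x, t)).re * (fderiv ℝ G (x, t) (1, 0)).re
          + (G (x, t)).im * (fderiv ℝ G (x, t) (1, 0)).im)) x :=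
      hasDerivAt_norm_sq (hG_u x t)
    have hmm := (ha.const_mul σ).const_add 1
    exact (Real.hasDerivAt_sqrt (ne_of_gt (hpos' x t))).comp x hmm
  have h2 : HasDerivAt (fun u => ‖q u t‖ ^ 2 * Real.sqrt (1 + σ * ‖G (u, t)‖ ^ 2))
      (‖q x t‖ ^ 2 * (1 / (2 * Real.sqrt (1 + σ * ‖G (x, t)‖ ^ 2)) *
          (σ * (2 * ((G (x, t)).re * (fderiv ℝ G (x, t) (1, 0)).re
            + (G (x, t)).im * (fderiv ℝ G (x, t) (1, 0)).im))))
        + 2 * ((q x t).re * (G (x, t)).re + (q x t).im * (G (x, t)).im)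
          * Real.sqrt (1 + σ * ‖G (x, t)‖ ^ 2)) x := by
    have := hb.mul hsx
    exact this.congr_deriv (by ring)
  have e2 : pd1 (fun u v => ‖q u v‖ ^ 2 * Real.sqrt (1 + σ * ‖pd1 q u v‖ ^ 2)) x t
      = ‖q x t‖ ^ 2 * (1 / (2 * Real.sqrt (1 + σ * ‖G (x, t)‖ ^ 2)) *
          (σ * (2 * ((G (x, t)).re * (fderiv ℝ G (x, t) (1, 0)).re
            + (G (x, t)).im * (fderiv ℝ G (x, t) (1, 0)).im))))
        + 2 * ((q x t).re * (G (x, t)).re + (q x t).im * (G (x, t)).im)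
          * Real.sqrt (1 + σ * ‖G (x, t)‖ ^ 2) := by
    have hfun : (fun u => ‖q u t‖ ^ 2 * Real.sqrt (1 + σ * ‖pd1 q u t‖ ^ 2))
        = fun u => ‖q u t‖ ^ 2 * Real.sqrt (1 + σ * ‖G (u, t)‖ ^ 2) := by
      funext u; rw [hpd1]
    have hrfl : pd1 (fun u v => ‖q u v‖ ^ 2 * Real.sqrt (1 + σ * ‖pd1 q u v‖ ^ 2)) x t
        = deriv (fun u => ‖q u t‖ ^ 2 * Real.sqrt (1 + σ * ‖pd1 q u t‖ ^ 2)) x := rfl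
    rw [hrfl, hfun]
    exact h2.deriv
  -- rewrite the CSP equation
  have hof : HasDerivAt (fun u => ((‖q u t‖ ^ 2 : ℝ) : ℂ))
      (((2 * ((q x t).re * (G (x, t)).re + (q x t).im * (G (x, t)).im) : ℝ) : ℂ)) x :=
    Complex.ofRealCLM.hasFDerivAt.comp_hasDerivAt x hb
  have hQxxD : HasDerivAt (fun u => pd1 q u t) (fderiv ℝ G (x, t) (1, 0)) x := by
    have hfun : (fun u => pd1 q u t) = fun u => G (u, t) := funext fun u => hpd1 u t
    rw [hfun]; exact hG_u x t
  have e3 : pd1 (fun u v => ((‖q u v‖ ^ 2 : ℝ) : ℂ) * pd1 q u v) x t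
      = ((2 * ((q x t).re * (G (x, t)).re + (q x t).im * (G (x, t)).im) : ℝ) : ℂ) * G (x, t)
        + ((‖q x t‖ ^ 2 : ℝ) : ℂ) * fderiv ℝ G (x, t) (1, 0) := by
    have hrfl : pd1 (fun u v => ((‖q u v‖ ^ 2 : ℝ) : ℂ) * pd1 q u v) x t
        = deriv (fun u => ((‖q u t‖ ^ 2 : ℝ) : ℂ) * pd1 q u t) x := rfl
    rw [hrfl, HasDerivAt.deriv (f := fun u => ((‖q u t‖ ^ 2 : ℝ) : ℂ) * pd1 q u t) (hof.mul hQxxD), hpd1]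
  have e4 : pd2 (pd1 q) x t = fderiv ℝ G (x, t) (0, 1) := by
    have hfun : (fun v => pd1 q x v) = fun v => G (x, v) := funext fun v => hpd1 x v
    simp only [pd2]
    rw [hfun]
    exact (hG_v x t).deriv
  have hE := hCSP x t
  rw [e3, e4] at hE
  rw [show ((σ : ℂ) / 2) = (((σ / 2 : ℝ)) : ℂ) by push_cast; ring] at hE
  have hre := congrArg Complex.re hE
  have him := congrArg Complex.im hE
  simp only [Complex.add_re, Complex.add_im, Complex.mul_re, Complex.mul_im,
    Complex.ofReal_re, Complex.ofReal_im, Complex.zero_re, Complex.zero_im,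
    zero_mul, mul_zero, sub_zero, add_zero, zero_add, zero_sub, neg_zero] at hre him
  -- the key real identity
  have hkey : (G (x, t)).re * (fderiv ℝ G (x, t) (0, 1)).re
        + (G (x, t)).im * (fderiv ℝ G (x, t) (0, 1)).im
      = -(((q x t).re * (G (x, t)).re + (q x t).im * (G (x, t)).im)
            * (1 + σ * ‖G (x, t)‖ ^ 2))
        - σ / 2 * ‖q x t‖ ^ 2 * ((G (x, t)).re * (fderiv ℝ G (x, t) (1, 0)).re
            + (G (x, t)).im * (fderiv ℝ G (x, t) (1, 0)).im) := by
    rw [norm_sq_re_im (G (x, t))]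
    linear_combination (G (x, t)).re * hre + (G (x, t)).im * him
  rw [e1, e2]
  exact final_algebra σ (Real.sqrt (1 + σ * ‖G (x, t)‖ ^ 2))
    ((G (x, t)).re * (fderiv ℝ G (x, t) (0, 1)).re
      + (G (x, t)).im * (fderiv ℝ G (x, t) (0, 1)).im)
    ((q x t).re * (G (x, t)).re + (q x t).im * (G (x, t)).im)
    ((G (x, t)).re * (fderiv ℝ G (x, t) (1, 0)).re
      + (G (x, t)).im * (fderiv ℝ G (x, t) (1, 0)).im)
    (‖q x t‖ ^ 2) (‖G (x, t)‖ ^ 2) hsne hss hkey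
end
end

section
/- Let q : ℝ² → ℂ be a smooth function of (x,t), and for λ ∈ ℝ, λ ≠ 0, define the 2×2 complex matrices P(x,t;λ) = -(i/(2λ))·[[1, q_x],[-q̄_x, -1]] and Q(x,t;λ) = [[-iλ/2 - i|q|²/(4λ), -i|q|²q_x/(4λ) + q/2],[i|q|²q̄_x/(4λ) + q̄/2, iλ/2 + i|q|²/(4λ)]], where q̄ denotes the complex conjugate of q. Then the zero-curvature condition ∂_t P − ∂_x Q + P·Q − Q·P = 0 holds identically for all λ ≠ 0 if and only if q satisfies the defocusing complex short pulse equation q_{xt} + q − (1/2)(|q|² q_x)_x = 0. -/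
noncomputable section

/-- The matrix `P(x,t;λ) = -(i/(2λ))·[[1, q_x],[-q̄_x, -1]]`. -/
def Pmat (q : ℝ → ℝ → ℂ) (lam : ℝ) (x t : ℝ) : Matrix (Fin 2) (Fin 2) ℂ :=
  (-(Complex.I) / (2 * (lam : ℂ))) •
    !![1, pd1 q x t;
       -(starRingEnd ℂ (pd1 q x t)), -1]

/-- The matrix
`Q(x,t;λ) = [[-iλ/2 - i|q|²/(4λ), -i|q|²q_x/(4λ) + q/2],[i|q|²q̄_x/(4λ) + q̄/2, iλ/2 + i|q|²/(4λ)]]`. -/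
def Qmat (q : ℝ → ℝ → ℂ) (lam : ℝ) (x t : ℝ) : Matrix (Fin 2) (Fin 2) ℂ :=
  !![-(Complex.I * (lam : ℂ)) / 2 - Complex.I * ((‖q x t‖ ^ 2 : ℝ) : ℂ) / (4 * (lam : ℂ)),
       -(Complex.I) * ((‖q x t‖ ^ 2 : ℝ) : ℂ) * pd1 q x t / (4 * (lam : ℂ)) + q x t / 2;
     Complex.I * ((‖q x t‖ ^ 2 : ℝ) : ℂ) * starRingEnd ℂ (pd1 q x t) / (4 * (lam : ℂ))
         + starRingEnd ℂ (q x t) / 2,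
       Complex.I * (lam : ℂ) / 2 + Complex.I * ((‖q x t‖ ^ 2 : ℝ) : ℂ) / (4 * (lam : ℂ))]

namespace CSPaux

open Function

lemma normsq_eq (z : ℂ) : ((‖z‖ ^ 2 : ℝ) : ℂ) = z * star z := by
  rw [Complex.star_def, Complex.mul_conj]
  norm_cast
  rw [Complex.normSq_eq_norm_sq]

lemma hasDerivAt_pd1 {F : ℝ → ℝ → ℂ} (hF : ContDiff ℝ (⊤ : ℕ∞) (uncurry F)) (x t : ℝ) :
    HasDerivAt (fun u => F u t) (pd1 F x t) x := by
  have h : DifferentiableAt ℝ (fun u => F u t) x :=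
    ((hF.differentiable (by simp)).comp
      ((differentiable_id).prodMk (differentiable_const t))).differentiableAt
  exact h.hasDerivAt

lemma hasDerivAt_pd2 {F : ℝ → ℝ → ℂ} (hF : ContDiff ℝ (⊤ : ℕ∞) (uncurry F)) (x t : ℝ) :
    HasDerivAt (fun v => F x v) (pd2 F x t) t := by
  have h : DifferentiableAt ℝ (fun v => F x v) t :=
    ((hF.differentiable (by simp)).comp
      ((differentiable_const x).prodMk differentiable_id)).differentiableAt
  exact h.hasDerivAt

lemma contDiff_pd1 {F : ℝ → ℝ → ℂ} (hF : ContDiff ℝ (⊤ : ℕ∞) (uncurry F)) :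
    ContDiff ℝ (⊤ : ℕ∞) (uncurry (pd1 F)) := by
  have h1 : ∀ x t : ℝ, pd1 F x t = fderiv ℝ (uncurry F) (x, t) (1, 0) := by
    intro x t
    have hL : HasFDerivAt (fun u : ℝ => (u, t))
        ((ContinuousLinearMap.id ℝ ℝ).prod 0) x :=
      HasFDerivAt.prodMk (hasFDerivAt_id x) (hasFDerivAt_const t x)
    have hF' := ((hF.differentiable (by simp)) (x, t)).hasFDerivAt
    have hc := (hF'.comp x hL).hasDerivAt
    have : pd1 F x t
        = ((fderiv ℝ (uncurry F) (x, t)).comp ((ContinuousLinearMap.id ℝ ℝ).prod 0)) 1 :=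
      hc.deriv
    simpa using this
  have h2 : uncurry (pd1 F) = fun p : ℝ × ℝ => fderiv ℝ (uncurry F) p (1, 0) := by
    funext p; exact h1 p.1 p.2
  rw [h2]
  exact (hF.fderiv_right (by simp)).clm_apply contDiff_const

lemma pd1_eq {F : ℝ → ℝ → ℂ} {x t : ℝ} {c : ℂ}
    (h : HasDerivAt (fun u => F u t) c x) : pd1 F x t = c := h.deriv

lemma pd2_eq {F : ℝ → ℝ → ℂ} {x t : ℝ} {c : ℂ}
    (h : HasDerivAt (fun v => F x v) c t) : pd2 F x t = c := h.deriv

lemma contDiff_normsq {q : ℝ → ℝ → ℂ} (hq : ContDiff ℝ (⊤ : ℕ∞) (uncurry q)) :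
    ContDiff ℝ (⊤ : ℕ∞) (uncurry fun u v => ((‖q u v‖ ^ 2 : ℝ) : ℂ)) := by
  have h2 : uncurry (fun u v => ((‖q u v‖ ^ 2 : ℝ) : ℂ))
      = fun p : ℝ × ℝ => uncurry q p * star (uncurry q p) := by
    funext p; exact normsq_eq _
  rw [h2]
  exact hq.mul (Complex.conjCLE.contDiff.comp hq)

set_option maxHeartbeats 1600000 in
lemma key (q : ℝ → ℝ → ℂ) (hq : ContDiff ℝ (⊤ : ℕ∞) (Function.uncurry q))
    (lam : ℝ) (hlam : lam ≠ 0) (x t : ℝ) :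
    (Matrix.of fun i j => pd2 (fun u v => Pmat q lam u v i j) x t)
      - (Matrix.of fun i j => pd1 (fun u v => Qmat q lam u v i j) x t)
      + Pmat q lam x t * Qmat q lam x t
      - Qmat q lam x t * Pmat q lam x t
    = !![0, -Complex.I/(2*(lam:ℂ)) * (pd2 (pd1 q) x t + q x t
            - (1 / 2) * pd1 (fun u v => ((‖q u v‖ ^ 2 : ℝ) : ℂ) * pd1 q u v) x t);
         Complex.I/(2*(lam:ℂ)) * star (pd2 (pd1 q) x t + q x t
            - (1 / 2) * pd1 (fun u v => ((‖q u v‖ ^ 2 : ℝ) : ℂ) * pd1 q u v) x t), 0] := by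
  have hp := contDiff_pd1 hq
  have hN := contDiff_normsq hq
  have hx : HasDerivAt (fun u => q u t) (pd1 q x t) x := hasDerivAt_pd1 hq x t
  have hR : HasDerivAt (fun u => ((‖q u t‖ ^ 2 : ℝ) : ℂ))
      (pd1 q x t * star (q x t) + q x t * star (pd1 q x t)) x := by
    have hfun : (fun u => ((‖q u t‖ ^ 2 : ℝ) : ℂ)) = fun u => q u t * star (q u t) := by
      funext u; exact normsq_eq _
    rw [hfun]; exact hx.mul hx.star
  have hs : HasDerivAt (fun u => ((‖q u t‖ ^ 2 : ℝ) : ℂ) * pd1 q u t)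
      (pd1 (fun u v => ((‖q u v‖ ^ 2 : ℝ) : ℂ) * pd1 q u v) x t) x :=
    hasDerivAt_pd1 (F := fun u v => ((‖q u v‖ ^ 2 : ℝ) : ℂ) * pd1 q u v) (hN.mul hp) x t
  -- the dP/dt matrix
  have hP : (Matrix.of fun i j => pd2 (fun u v => Pmat q lam u v i j) x t)
      = !![0, -Complex.I/(2*(lam:ℂ)) * pd2 (pd1 q) x t;
           Complex.I/(2*(lam:ℂ)) * star (pd2 (pd1 q) x t), 0] := by
    have e00 : (fun u v => Pmat q lam u v 0 0) = fun _ _ => -Complex.I/(2*(lam:ℂ)) := by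
      funext u v; simp [Pmat]
    have e01 : (fun u v => Pmat q lam u v 0 1)
        = fun u v => -Complex.I/(2*(lam:ℂ)) * pd1 q u v := by
      funext u v; simp [Pmat]
    have e10 : (fun u v => Pmat q lam u v 1 0)
        = fun u v => Complex.I/(2*(lam:ℂ)) * star (pd1 q u v) := by
      funext u v; simp [Pmat, Complex.star_def]; ring
    have e11 : (fun u v => Pmat q lam u v 1 1) = fun _ _ => Complex.I/(2*(lam:ℂ)) := by
      funext u v; simp [Pmat]; ring
    apply Matrix.ext; intro i j
    fin_cases i <;> fin_cases j <;> simp only [Fin.mk_zero, Fin.mk_one, Fin.isValue,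
      Matrix.of_apply, Matrix.cons_val', Matrix.cons_val_zero,
      Matrix.cons_val_one, Matrix.head_cons, Matrix.head_fin_const, Matrix.empty_val',
      Matrix.cons_val_fin_one]
    · rw [e00]; exact pd2_eq (hasDerivAt_const _ _)
    · rw [e01]; exact pd2_eq ((hasDerivAt_pd2 hp x t).const_mul _)
    · rw [e10]; exact pd2_eq ((hasDerivAt_pd2 hp x t).star.const_mul _)
    · rw [e11]; exact pd2_eq (hasDerivAt_const _ _)
  -- the dQ/dx matrix
  have hQ : (Matrix.of fun i j => pd1 (fun u v => Qmat q lam u v i j) x t)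
      = !![-Complex.I/(4*(lam:ℂ)) * (pd1 q x t * star (q x t) + q x t * star (pd1 q x t)),
           -Complex.I/(4*(lam:ℂ)) * pd1 (fun u v => ((‖q u v‖ ^ 2 : ℝ) : ℂ) * pd1 q u v) x t
             + (1/2) * pd1 q x t;
           Complex.I/(4*(lam:ℂ)) * star (pd1 (fun u v => ((‖q u v‖ ^ 2 : ℝ) : ℂ) * pd1 q u v) x t)
             + (1/2) * star (pd1 q x t),
           Complex.I/(4*(lam:ℂ)) * (pd1 q x t * star (q x t) + q x t * star (pd1 q x t))] := by
    have f00 : (fun u v => Qmat q lam u v 0 0)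
        = fun u v => -(Complex.I * (lam:ℂ))/2
            + (-Complex.I/(4*(lam:ℂ))) * ((‖q u v‖^2 : ℝ) : ℂ) := by
      funext u v; simp [Qmat]; ring
    have f01 : (fun u v => Qmat q lam u v 0 1)
        = fun u v => (-Complex.I/(4*(lam:ℂ))) * (((‖q u v‖^2 : ℝ) : ℂ) * pd1 q u v)
            + (1/2) * q u v := by
      funext u v; simp [Qmat]; ring
    have f10 : (fun u v => Qmat q lam u v 1 0)
        = fun u v => (Complex.I/(4*(lam:ℂ))) * star (((‖q u v‖^2 : ℝ) : ℂ) * pd1 q u v)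
            + (1/2) * star (q u v) := by
      funext u v; simp [Qmat, Complex.star_def, map_mul, Complex.conj_ofReal]; ring
    have f11 : (fun u v => Qmat q lam u v 1 1)
        = fun u v => Complex.I * (lam:ℂ)/2
            + (Complex.I/(4*(lam:ℂ))) * ((‖q u v‖^2 : ℝ) : ℂ) := by
      funext u v; simp [Qmat]; ring
    apply Matrix.ext; intro i j
    fin_cases i <;> fin_cases j <;> simp only [Fin.mk_zero, Fin.mk_one, Fin.isValue,
      Matrix.of_apply, Matrix.cons_val', Matrix.cons_val_zero,
      Matrix.cons_val_one, Matrix.head_cons, Matrix.head_fin_const, Matrix.empty_val',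
      Matrix.cons_val_fin_one]
    · rw [f00]; exact pd1_eq ((hR.const_mul _).const_add _)
    · rw [f01]; exact pd1_eq ((hs.const_mul _).add (hx.const_mul _))
    · rw [f10]; exact pd1_eq ((hs.star.const_mul _).add (hx.star.const_mul _))
    · rw [f11]; exact pd1_eq ((hR.const_mul _).const_add _)
  have hPe : Pmat q lam x t
      = !![-Complex.I/(2*(lam:ℂ)), -Complex.I/(2*(lam:ℂ)) * pd1 q x t;
           Complex.I/(2*(lam:ℂ)) * star (pd1 q x t), Complex.I/(2*(lam:ℂ))] := by
    apply Matrix.ext; intro i j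
    fin_cases i <;> fin_cases j <;> simp [Pmat, Complex.star_def] <;> ring
  have hl : (lam:ℂ) ≠ 0 := Complex.ofReal_ne_zero.mpr hlam
  have hm : (lam:ℂ) * ((lam:ℂ))⁻¹ = 1 := mul_inv_cancel₀ hl
  rw [hP, hQ, hPe, Qmat, Matrix.mul_fin_two, Matrix.mul_fin_two]
  apply Matrix.ext; intro i j
  fin_cases i <;> fin_cases j <;>
    simp only [Fin.mk_zero, Fin.mk_one, Fin.isValue, Matrix.sub_apply, Matrix.add_apply,
      Matrix.of_apply, Matrix.cons_val', Matrix.cons_val_zero, Matrix.cons_val_one,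
      Matrix.head_cons, Matrix.head_fin_const, Matrix.empty_val', Matrix.cons_val_fin_one,
      Complex.star_def, map_add, map_sub, map_mul, map_div₀, map_one, map_ofNat,
      Complex.conj_I, Complex.conj_ofReal]
  · ring
  · linear_combination ((1/2:ℂ)*(pd1 q x t)) * hm
      + ((-1/2:ℂ)*(lam:ℂ)*((lam:ℂ))⁻¹*(pd1 q x t)) * Complex.I_sq
  · linear_combination ((1/2:ℂ)*((starRingEnd ℂ) (pd1 q x t))) * hm
      + ((-1/2:ℂ)*(lam:ℂ)*((lam:ℂ))⁻¹*((starRingEnd ℂ) (pd1 q x t))) * Complex.I_sq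
  · ring

end CSPaux

/-- the zero-curvature condition `∂_t P − ∂_x Q + P·Q − Q·P = 0` holds for all
`λ ≠ 0` iff `q` satisfies the defocusing complex short pulse equation
`q_{xt} + q − (1/2)(|q|² q_x)_x = 0`. -/
theorem csp_lax_pair_zero_curvature (q : ℝ → ℝ → ℂ)
    (hq : ContDiff ℝ (⊤ : ℕ∞) (Function.uncurry q)) :
    (∀ lam : ℝ, lam ≠ 0 → ∀ x t : ℝ,
        (Matrix.of fun i j => pd2 (fun u v => Pmat q lam u v i j) x t)
          - (Matrix.of fun i j => pd1 (fun u v => Qmat q lam u v i j) x t)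
          + Pmat q lam x t * Qmat q lam x t
          - Qmat q lam x t * Pmat q lam x t = 0)
      ↔ (∀ x t : ℝ,
          pd2 (pd1 q) x t + q x t
            - (1 / 2) * pd1 (fun u v => ((‖q u v‖ ^ 2 : ℝ) : ℂ) * pd1 q u v) x t = 0) := by
  constructor
  · intro h x t
    have h0 := (CSPaux.key q hq 1 one_ne_zero x t).symm.trans (h 1 one_ne_zero x t)
    have h01 := congrFun (congrFun h0 0) 1
    simp only [Matrix.of_apply, Matrix.cons_val', Matrix.cons_val_zero, Matrix.cons_val_one, Matrix.head_cons,
      Matrix.empty_val', Matrix.cons_val_fin_one, Matrix.head_fin_const, Matrix.zero_apply,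
      Complex.ofReal_one, mul_one] at h01
    linear_combination (2*Complex.I) * h01 + (pd2 (pd1 q) x t + q x t
      - (1/2) * pd1 (fun u v => ((‖q u v‖ ^ 2 : ℝ) : ℂ) * pd1 q u v) x t) * Complex.I_sq
  · intro h lam hlam x t
    rw [CSPaux.key q hq lam hlam x t, h x t]
    apply Matrix.ext; intro i j
    fin_cases i <;> fin_cases j <;> simp
end
end

section
/- Let N ≥ 1, n, k, l ∈ ℤ, and let p_1,…,p_N, p̄_1,…,p̄_N, a, b, ξ_{10},…,ξ_{N0}, ξ̄_{10},…,ξ̄_{N0} ∈ ℂ satisfy p_i + p̄_j ≠ 0 for all i,j, p_i ∉ {0, a, b}, and p̄_j ∉ {0, −a, −b}. Then the Gram-type tau functions τ_{nkl}, viewed as smooth functions of the real variables (x_1, x_{-1}) (with t_a, t_b fixed), satisfy the bilinear equation ((1/2) D_{x_1} D_{x_{-1}} − 1) τ_{nkl} · τ_{nkl} = − τ_{n+1,kl} · τ_{n-1,kl}, i.e. ∂_{x_1}∂_{x_{-1}}τ_{nkl} · τ_{nkl} − ∂_{x_1}τ_{nkl} · ∂_{x_{-1}}τ_{nkl} − τ_{nkl}²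 = − τ_{n+1,kl} τ_{n-1,kl}. -/
noncomputable section

/-- The phase `ξ_i = x_{-1}/p_i + p_i x_1 + t_a/(p_i − a) + t_b/(p_i − b) + ξ_{i0}`. -/
def xiph {N : ℕ} (p : Fin N → ℂ) (a b : ℂ) (xi0 : Fin N → ℂ) (i : Fin N)
    (x1 xm1 ta tb : ℝ) : ℂ :=
  (xm1 : ℂ) / p i + p i * (x1 : ℂ) + (ta : ℂ) / (p i - a) + (tb : ℂ) / (p i - b) + xi0 i

/-- The phase `ξ̄_j = x_{-1}/p̄_j + p̄_j x_1 + t_a/(p̄_j + a) + t_b/(p̄_j + b) + ξ̄_{j0}`. -/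
def xibph {N : ℕ} (pb : Fin N → ℂ) (a b : ℂ) (xib0 : Fin N → ℂ) (j : Fin N)
    (x1 xm1 ta tb : ℝ) : ℂ :=
  (xm1 : ℂ) / pb j + pb j * (x1 : ℂ) + (ta : ℂ) / (pb j + a) + (tb : ℂ) / (pb j + b) + xib0 j

/-- `φ_i^{nkl} = p_i^n (p_i − a)^k (p_i − b)^l e^{ξ_i}`. -/
def phifn {N : ℕ} (p : Fin N → ℂ) (a b : ℂ) (xi0 : Fin N → ℂ) (n k l : ℤ) (i : Fin N)
    (x1 xm1 ta tb : ℝ) : ℂ :=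
  p i ^ n * (p i - a) ^ k * (p i - b) ^ l * Complex.exp (xiph p a b xi0 i x1 xm1 ta tb)

/-- `ψ_j^{nkl} = (−1/p̄_j)^n (−1/(p̄_j + a))^k (−1/(p̄_j + b))^l e^{ξ̄_j}`. -/
def psifn {N : ℕ} (pb : Fin N → ℂ) (a b : ℂ) (xib0 : Fin N → ℂ) (n k l : ℤ) (j : Fin N)
    (x1 xm1 ta tb : ℝ) : ℂ :=
  (-1 / pb j) ^ n * (-1 / (pb j + a)) ^ k * (-1 / (pb j + b)) ^ l *
    Complex.exp (xibph pb a b xib0 j x1 xm1 ta tb)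

/-- The Gram-type tau function `τ_{nkl} = det(δ_{ij} + φ_i ψ_j/(p_i + p̄_j))`. -/
def tauf {N : ℕ} (p pb : Fin N → ℂ) (a b : ℂ) (xi0 xib0 : Fin N → ℂ) (n k l : ℤ)
    (x1 xm1 ta tb : ℝ) : ℂ :=
  Matrix.det (Matrix.of fun i j : Fin N =>
    (if i = j then (1 : ℂ) else 0) +
      phifn p a b xi0 n k l i x1 xm1 ta tb * psifn pb a b xib0 n k l j x1 xm1 ta tb
        / (p i + pb j))

/-!
Write `M` for the Gram matrix at level `n`, `T = det M`, `φ, ψ` for the vectors `(φ_i)`, `(ψ_j)`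
and `B(u, w) = w ⬝ᵥ adj M *ᵥ u`. The first derivatives of `M` are rank one,
`∂_{x_1} M = φ ⊗ ψ` and `∂_{x_{-1}} M = (φ/p) ⊗ (ψ/p̄)`, and so are the shifts in `n`:
`M_{n+1} = M - φ ⊗ (ψ/p̄)` and `M_{n-1} = M - (φ/p) ⊗ ψ`. By Jacobi's formula and the matrix
determinant lemma every term of the equation is `T` or a value of `B` for `M` or for
`M + (φ/p) ⊗ (ψ/p̄)`, and the equation becomes a sum of three instances of the Sherman–Morrison
formula in adjugate form. That formula follows from the rank-two determinant lemma
`T · det (M + u ⊗ w + u' ⊗ w') = (T + B(u, w)) (T + B(u', w')) - B(u, w') B(u', w)`, which, like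
the matrix determinant lemma, comes from the Weinstein–Aronszajn identity for invertible `M` and
extends to all `M` by density.
-/

open Matrix

namespace Matrix

variable {m : Type*} [Fintype m] [DecidableEq m]

theorem trace_adjugate_mul {R : Type*} [CommRing R] (A B : Matrix m m R) :
    trace (adjugate A * B) = ∑ c, det (updateCol A c fun k => B k c) := by
  simp only [trace, diag, mul_apply, ← cramer_apply, cramer_eq_adjugate_mulVec, mulVec, dotProduct]

theorem trace_adjugate_mul_vecMulVec {R : Type*} [CommRing R] (A : Matrix m m R) (u w : m → R) :
    trace (adjugate A * vecMulVec u w) = w ⬝ᵥ adjugate A *ᵥ u := by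
  rw [mul_vecMulVec, trace_vecMulVec, dotProduct_comm]

theorem hasDerivAt_det {𝕜 R : Type*} [NontriviallyNormedField 𝕜] [NormedCommRing R]
    [NormedAlgebra 𝕜 R] {A : 𝕜 → Matrix m m R} {A' : Matrix m m R} {t : 𝕜}
    (h : ∀ i j, HasDerivAt (fun s => A s i j) (A' i j) t) :
    HasDerivAt (fun s => (A s).det) (trace (adjugate (A t) * A')) t := by
  simp only [det_apply']
  refine (HasDerivAt.fun_sum fun σ _ =>
    (HasDerivAt.fun_finsetProd fun c _ => h (σ c) c).const_mul
      ((Equiv.Perm.sign σ : ℤ) : R)).congr_deriv ?_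
  rw [trace_adjugate_mul]
  simp only [det_apply', Finset.mul_sum]
  rw [Finset.sum_comm]
  refine Finset.sum_congr rfl fun c _ => Finset.sum_congr rfl fun σ _ => ?_
  rw [← Finset.mul_prod_erase _ _ (Finset.mem_univ c), smul_eq_mul, updateCol_self,
    mul_comm (A' _ _)]
  congr 2
  exact Finset.prod_congr rfl fun i hi => (updateCol_ne (Finset.ne_of_mem_erase hi)).symm

section NormedField

variable {𝕜 : Type*} [NontriviallyNormedField 𝕜]

open Polynomial Filter Topology in
theorem dense_setOf_isUnit_det : Dense {A : Matrix m m 𝕜 | IsUnit A.det} := by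
  intro A
  set q : 𝕜[X] := det ((X : 𝕜[X]) • (1 : Matrix m m 𝕜[X]) + A.map C)
  have hq : q ≠ 0 := Monic.ne_zero (leadingCoeff_det_X_one_add_C A)
  have heval : ∀ t : 𝕜, q.eval t = det (t • 1 + A) := fun t => by
    rw [← coe_evalRingHom, RingHom.map_det]
    congr 1
    ext i j
    by_cases hij : i = j <;> simp [hij]
  refine mem_closure_of_tendsto (b := 𝓝[≠] 0) (f := fun t : 𝕜 => t • 1 + A) ?_ ?_
  · refine (Continuous.tendsto' ?_ 0 A (by simp)).mono_left nhdsWithin_le_nhds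
    fun_prop
  · filter_upwards [nhdsNE_le_cofinite 0 (finite_setOfPred_isRoot hq).compl_mem_cofinite]
      with t ht
    exact isUnit_iff_ne_zero.2 (heval t ▸ ht)

theorem det_mul_dotProduct_inv_mulVec {A : Matrix m m 𝕜} (hA : IsUnit A.det) (u w : m → 𝕜) :
    A.det * (w ⬝ᵥ A⁻¹ *ᵥ u) = w ⬝ᵥ adjugate A *ᵥ u := by
  rw [inv_def, smul_mulVec, dotProduct_smul, smul_eq_mul, ← mul_assoc,
    Ring.mul_inverse_cancel _ hA, one_mul]

theorem det_add_vecMulVec (A : Matrix m m 𝕜) (u w : m → 𝕜) :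
    det (A + vecMulVec u w) = det A + w ⬝ᵥ adjugate A *ᵥ u := by
  refine congrFun (Continuous.ext_on dense_setOf_isUnit_det
    (f := fun A => det (A + vecMulVec u w)) (g := fun A => det A + w ⬝ᵥ adjugate A *ᵥ u)
    (by fun_prop) (by fun_prop) fun A (hA : IsUnit A.det) => ?_) A
  have hfac : A + vecMulVec u w = A * (1 + vecMulVec (A⁻¹ *ᵥ u) w) := by
    rw [Matrix.mul_add, mul_one, mul_vecMulVec, mulVec_mulVec, mul_nonsing_inv _ hA, one_mulVec]
  beta_reduce
  rw [hfac, det_mul, vecMulVec_eq Unit, det_one_add_replicateCol_mul_replicateRow, mul_add,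
    mul_one, det_mul_dotProduct_inv_mulVec hA]

theorem det_sub_vecMulVec (A : Matrix m m 𝕜) (u w : m → 𝕜) :
    det (A - vecMulVec u w) = det A - w ⬝ᵥ adjugate A *ᵥ u := by
  rw [sub_eq_add_neg, ← vecMulVec_neg, det_add_vecMulVec, neg_dotProduct, ← sub_eq_add_neg]

theorem det_mul_det_add_vecMulVec_add_vecMulVec (A : Matrix m m 𝕜) (u w u' w' : m → 𝕜) :
    det A * det (A + vecMulVec u w + vecMulVec u' w') =
      (det A + w ⬝ᵥ adjugate A *ᵥ u) * (det A + w' ⬝ᵥ adjugate A *ᵥ u') -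
        (w' ⬝ᵥ adjugate A *ᵥ u) * (w ⬝ᵥ adjugate A *ᵥ u') := by
  refine congrFun (Continuous.ext_on dense_setOf_isUnit_det
    (f := fun A => det A * det (A + vecMulVec u w + vecMulVec u' w'))
    (g := fun A => (det A + w ⬝ᵥ adjugate A *ᵥ u) * (det A + w' ⬝ᵥ adjugate A *ᵥ u') -
        (w' ⬝ᵥ adjugate A *ᵥ u) * (w ⬝ᵥ adjugate A *ᵥ u'))
    (by fun_prop) (by fun_prop) fun A (hA : IsUnit A.det) => ?_) A
  let U : Matrix m (Fin 2) 𝕜 := of fun i => ![u i, u' i]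
  let V : Matrix (Fin 2) m 𝕜 := of ![w, w']
  have hUV : vecMulVec u w + vecMulVec u' w' = U * V := by
    ext i j
    simp [U, V, mul_apply, Fin.sum_univ_two, vecMulVec_apply]
  have hentry : ∀ a b, (V * A⁻¹ * U) a b = (fun j => V a j) ⬝ᵥ A⁻¹ *ᵥ fun i => U i b := by
    intro a b
    simp only [mul_apply, dotProduct, mulVec, Finset.sum_mul, Finset.mul_sum, mul_assoc]
    exact Finset.sum_comm
  beta_reduce
  rw [add_assoc, hUV, det_add_mul U V hA, det_fin_two]
  simp only [add_apply, one_apply_eq, one_apply_ne zero_ne_one, one_apply_ne one_ne_zero, hentry,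
    U, V, of_apply, cons_val_zero, cons_val_one, ← det_mul_dotProduct_inv_mulVec hA]
  ring

theorem det_mul_dotProduct_adjugate_add_vecMulVec (A : Matrix m m 𝕜) (u w u' w' : m → 𝕜) :
    det A * (w ⬝ᵥ adjugate (A + vecMulVec u' w') *ᵥ u) =
      det A * (w ⬝ᵥ adjugate A *ᵥ u) + (w ⬝ᵥ adjugate A *ᵥ u) * (w' ⬝ᵥ adjugate A *ᵥ u') -
        (w' ⬝ᵥ adjugate A *ᵥ u) * (w ⬝ᵥ adjugate A *ᵥ u') := by
  have h₁ := det_add_vecMulVec (A + vecMulVec u' w') u w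
  have h₂ := det_add_vecMulVec A u' w'
  have h₃ := det_mul_det_add_vecMulVec_add_vecMulVec A u' w' u w
  linear_combination (-det A) * h₁ + h₃ - det A * h₂

end NormedField

end Matrix

section GramMatrix

variable {N : ℕ} (p pb : Fin N → ℂ) (a b : ℂ) (xi0 xib0 : Fin N → ℂ) (n k l : ℤ)
  (x1 xm1 ta tb : ℝ)

def phiVec : Fin N → ℂ := fun i => phifn p a b xi0 n k l i x1 xm1 ta tb

def psiVec : Fin N → ℂ := fun j => psifn pb a b xib0 n k l j x1 xm1 ta tb

def gramMatrix : Matrix (Fin N) (Fin N) ℂ :=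
  of fun i j => (if i = j then 1 else 0) +
    phiVec p a b xi0 n k l x1 xm1 ta tb i * psiVec pb a b xib0 n k l x1 xm1 ta tb j / (p i + pb j)

local notation "Φ" => phiVec p a b xi0 n k l x1 xm1 ta tb
local notation "Ψ" => psiVec pb a b xib0 n k l x1 xm1 ta tb
local notation "G" => gramMatrix p pb a b xi0 xib0 n k l x1 xm1 ta tb

theorem tauf_eq_det_gramMatrix :
    tauf p pb a b xi0 xib0 n k l x1 xm1 ta tb = det G := rfl

theorem xibph_eq_xiph : xibph pb a b xib0 = xiph pb (-a) (-b) xib0 := by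
  ext j x1 xm1 ta tb
  simp only [xibph, xiph, sub_neg_eq_add]

theorem hasDerivAt_xiph_x1 (i : Fin N) :
    HasDerivAt (fun x : ℝ => xiph p a b xi0 i x xm1 ta tb) (p i) x1 :=
  (((((hasDerivAt_id x1).ofReal_comp.const_mul (p i)).const_add _).add_const _).add_const
    _ |>.add_const _).congr_deriv (mul_one _)

theorem hasDerivAt_xiph_xm1 (i : Fin N) :
    HasDerivAt (fun y : ℝ => xiph p a b xi0 i x1 y ta tb) (p i)⁻¹ xm1 :=
  (((((hasDerivAt_id xm1).ofReal_comp.div_const (p i)).add_const _).add_const _).add_const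
    _ |>.add_const _).congr_deriv (one_div _)

theorem hasDerivAt_phiVec_x1 (i : Fin N) :
    HasDerivAt (fun x : ℝ => phiVec p a b xi0 n k l x xm1 ta tb i) (p i * Φ i) x1 :=
  ((hasDerivAt_xiph_x1 p a b xi0 x1 xm1 ta tb i).cexp.const_mul _).congr_deriv
    (by simp only [phiVec, phifn]; ring)

theorem hasDerivAt_phiVec_xm1 (i : Fin N) :
    HasDerivAt (fun y : ℝ => phiVec p a b xi0 n k l x1 y ta tb i) (Φ i / p i) xm1 :=
  ((hasDerivAt_xiph_xm1 p a b xi0 x1 xm1 ta tb i).cexp.const_mul _).congr_deriv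
    (by simp only [phiVec, phifn]; ring)

theorem hasDerivAt_psiVec_x1 (j : Fin N) :
    HasDerivAt (fun x : ℝ => psiVec pb a b xib0 n k l x xm1 ta tb j) (pb j * Ψ j) x1 := by
  have h := hasDerivAt_xiph_x1 pb (-a) (-b) xib0 x1 xm1 ta tb j
  rw [← xibph_eq_xiph] at h
  exact (h.cexp.const_mul _).congr_deriv (by simp only [psiVec, psifn]; ring)

theorem hasDerivAt_psiVec_xm1 (j : Fin N) :
    HasDerivAt (fun y : ℝ => psiVec pb a b xib0 n k l x1 y ta tb j) (Ψ j / pb j) xm1 := by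
  have h := hasDerivAt_xiph_xm1 pb (-a) (-b) xib0 x1 xm1 ta tb j
  rw [← xibph_eq_xiph] at h
  exact (h.cexp.const_mul _).congr_deriv (by simp only [psiVec, psifn]; ring)

variable {p pb}

theorem hasDerivAt_gramMatrix_x1 (hsum : ∀ i j, p i + pb j ≠ 0) (i j : Fin N) :
    HasDerivAt (fun x : ℝ => gramMatrix p pb a b xi0 xib0 n k l x xm1 ta tb i j)
      (vecMulVec Φ Ψ i j) x1 := by
  refine ((((hasDerivAt_phiVec_x1 p a b xi0 n k l x1 xm1 ta tb i).mul
    (hasDerivAt_psiVec_x1 pb a b xib0 n k l x1 xm1 ta tb j)).div_const _).const_add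
      _).congr_deriv ?_
  rw [vecMulVec_apply]
  field_simp [hsum i j]

theorem hasDerivAt_gramMatrix_xm1 (hsum : ∀ i j, p i + pb j ≠ 0) (hp : ∀ i, p i ≠ 0)
    (hpb : ∀ j, pb j ≠ 0) (i j : Fin N) :
    HasDerivAt (fun y : ℝ => gramMatrix p pb a b xi0 xib0 n k l x1 y ta tb i j)
      (vecMulVec (Φ / p) (Ψ / pb) i j) xm1 := by
  refine ((((hasDerivAt_phiVec_xm1 p a b xi0 n k l x1 xm1 ta tb i).mul
    (hasDerivAt_psiVec_xm1 pb a b xib0 n k l x1 xm1 ta tb j)).div_const _).const_add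
      _).congr_deriv ?_
  rw [vecMulVec_apply, Pi.div_apply, Pi.div_apply]
  field_simp [hsum i j, hp i, hpb j]
  ring

theorem hasDerivAt_tauf_x1 (hsum : ∀ i j, p i + pb j ≠ 0) :
    HasDerivAt (fun x : ℝ => tauf p pb a b xi0 xib0 n k l x xm1 ta tb)
      (Ψ ⬝ᵥ adjugate G *ᵥ Φ) x1 := by
  rw [← trace_adjugate_mul_vecMulVec]
  exact hasDerivAt_det (hasDerivAt_gramMatrix_x1 a b xi0 xib0 n k l x1 xm1 ta tb hsum)

theorem hasDerivAt_tauf_xm1 (hsum : ∀ i j, p i + pb j ≠ 0) (hp : ∀ i, p i ≠ 0)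
    (hpb : ∀ j, pb j ≠ 0) :
    HasDerivAt (fun y : ℝ => tauf p pb a b xi0 xib0 n k l x1 y ta tb)
      ((Ψ / pb) ⬝ᵥ adjugate G *ᵥ (Φ / p)) xm1 := by
  rw [← trace_adjugate_mul_vecMulVec]
  exact hasDerivAt_det (hasDerivAt_gramMatrix_xm1 a b xi0 xib0 n k l x1 xm1 ta tb hsum hp hpb)

theorem hasDerivAt_deriv_tauf_xm1 (hsum : ∀ i j, p i + pb j ≠ 0) (hp : ∀ i, p i ≠ 0)
    (hpb : ∀ j, pb j ≠ 0) :
    HasDerivAt (fun x : ℝ => deriv (fun y : ℝ => tauf p pb a b xi0 xib0 n k l x y ta tb) xm1)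
      (Ψ ⬝ᵥ adjugate (G + vecMulVec (Φ / p) (Ψ / pb)) *ᵥ Φ
        + (Ψ / pb) ⬝ᵥ adjugate (G + vecMulVec (Φ / p) (Ψ / pb)) *ᵥ Φ
        + Ψ ⬝ᵥ adjugate (G + vecMulVec (Φ / p) (Ψ / pb)) *ᵥ (Φ / p)
        - Ψ ⬝ᵥ adjugate G *ᵥ Φ) x1 := by
  have hfun : (fun x : ℝ => deriv (fun y : ℝ => tauf p pb a b xi0 xib0 n k l x y ta tb) xm1) =
      fun x : ℝ => det (gramMatrix p pb a b xi0 xib0 n k l x xm1 ta tb +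
          vecMulVec (phiVec p a b xi0 n k l x xm1 ta tb / p)
            (psiVec pb a b xib0 n k l x xm1 ta tb / pb)) -
        det (gramMatrix p pb a b xi0 xib0 n k l x xm1 ta tb) := by
    ext x
    rw [(hasDerivAt_tauf_xm1 a b xi0 xib0 n k l x xm1 ta tb hsum hp hpb).deriv,
      det_add_vecMulVec, add_sub_cancel_left]
  have hrank : ∀ i j, HasDerivAt (fun x : ℝ => (gramMatrix p pb a b xi0 xib0 n k l x xm1 ta tb +
      vecMulVec (phiVec p a b xi0 n k l x xm1 ta tb / p)
        (psiVec pb a b xib0 n k l x xm1 ta tb / pb)) i j)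
      ((vecMulVec Φ Ψ + vecMulVec Φ (Ψ / pb) + vecMulVec (Φ / p) Ψ) i j) x1 := fun i j =>
    ((hasDerivAt_gramMatrix_x1 a b xi0 xib0 n k l x1 xm1 ta tb hsum i j).add
      (((hasDerivAt_phiVec_x1 p a b xi0 n k l x1 xm1 ta tb i).div_const (p i)).mul
        ((hasDerivAt_psiVec_x1 pb a b xib0 n k l x1 xm1 ta tb j).div_const (pb j)))).congr_deriv
      (by
        simp only [Matrix.add_apply, vecMulVec_apply, Pi.div_apply]
        field_simp [hp i, hpb j]
        ring)
  rw [hfun]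
  refine ((hasDerivAt_det hrank).sub (hasDerivAt_det
    (hasDerivAt_gramMatrix_x1 a b xi0 xib0 n k l x1 xm1 ta tb hsum))).congr_deriv ?_
  simp only [Matrix.mul_add, trace_add, trace_adjugate_mul_vecMulVec]

theorem gramMatrix_succ (hsum : ∀ i j, p i + pb j ≠ 0) (hp : ∀ i, p i ≠ 0)
    (hpb : ∀ j, pb j ≠ 0) :
    gramMatrix p pb a b xi0 xib0 (n + 1) k l x1 xm1 ta tb = G - vecMulVec Φ (Ψ / pb) := by
  ext i j
  have hψ : (-1 / pb j) ^ (n + 1) = -(-1 / pb j) ^ n / pb j := by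
    rw [zpow_add_one₀ (div_ne_zero (neg_ne_zero.2 one_ne_zero) (hpb j))]
    ring
  simp only [gramMatrix, phiVec, psiVec, phifn, psifn, zpow_add_one₀ (hp i), hψ, Matrix.sub_apply,
    of_apply, vecMulVec_apply, Pi.div_apply]
  field_simp [hsum i j, hpb j]
  ring

theorem gramMatrix_pred (hsum : ∀ i j, p i + pb j ≠ 0) (hp : ∀ i, p i ≠ 0)
    (hpb : ∀ j, pb j ≠ 0) :
    gramMatrix p pb a b xi0 xib0 (n - 1) k l x1 xm1 ta tb = G - vecMulVec (Φ / p) Ψ := by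
  ext i j
  have hψ : (-1 / pb j) ^ (n - 1) = -(pb j * (-1 / pb j) ^ n) := by
    rw [zpow_sub_one₀ (div_ne_zero (neg_ne_zero.2 one_ne_zero) (hpb j))]
    field_simp
  simp only [gramMatrix, phiVec, psiVec, phifn, psifn, zpow_sub_one₀ (hp i), hψ, Matrix.sub_apply,
    of_apply, vecMulVec_apply, Pi.div_apply]
  field_simp [hsum i j, hp i]
  ring

end GramMatrix

theorem kp_bilinear_first_general (N : ℕ) (n k l : ℤ)
    (p pb : Fin N → ℂ) (a b : ℂ) (xi0 xib0 : Fin N → ℂ)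
    (hsum : ∀ i j : Fin N, p i + pb j ≠ 0)
    (hp : ∀ i : Fin N, p i ≠ 0 ∧ p i ≠ a ∧ p i ≠ b)
    (hpb : ∀ j : Fin N, pb j ≠ 0 ∧ pb j ≠ -a ∧ pb j ≠ -b) :
    ∀ x1 xm1 ta tb : ℝ,
      deriv (fun u => deriv (fun v => tauf p pb a b xi0 xib0 n k l u v ta tb) xm1) x1
          * tauf p pb a b xi0 xib0 n k l x1 xm1 ta tb
        - deriv (fun u => tauf p pb a b xi0 xib0 n k l u xm1 ta tb) x1
          * deriv (fun v => tauf p pb a b xi0 xib0 n k l x1 v ta tb) xm1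
        - tauf p pb a b xi0 xib0 n k l x1 xm1 ta tb ^ 2
        = -(tauf p pb a b xi0 xib0 (n + 1) k l x1 xm1 ta tb
            * tauf p pb a b xi0 xib0 (n - 1) k l x1 xm1 ta tb) := by
  intro x1 xm1 ta tb
  have hp₀ : ∀ i, p i ≠ 0 := fun i => (hp i).1
  have hpb₀ : ∀ j, pb j ≠ 0 := fun j => (hpb j).1
  rw [(hasDerivAt_deriv_tauf_xm1 a b xi0 xib0 n k l x1 xm1 ta tb hsum hp₀ hpb₀).deriv,
    (hasDerivAt_tauf_x1 a b xi0 xib0 n k l x1 xm1 ta tb hsum).deriv,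
    (hasDerivAt_tauf_xm1 a b xi0 xib0 n k l x1 xm1 ta tb hsum hp₀ hpb₀).deriv]
  simp only [tauf_eq_det_gramMatrix,
    gramMatrix_succ a b xi0 xib0 n k l x1 xm1 ta tb hsum hp₀ hpb₀,
    gramMatrix_pred a b xi0 xib0 n k l x1 xm1 ta tb hsum hp₀ hpb₀, det_sub_vecMulVec]
  set A := gramMatrix p pb a b xi0 xib0 n k l x1 xm1 ta tb
  set φ := phiVec p a b xi0 n k l x1 xm1 ta tb
  set ψ := psiVec pb a b xib0 n k l x1 xm1 ta tb
  linear_combination det_mul_dotProduct_adjugate_add_vecMulVec A φ ψ (φ / p) (ψ / pb) +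
    det_mul_dotProduct_adjugate_add_vecMulVec A φ (ψ / pb) (φ / p) (ψ / pb) +
    det_mul_dotProduct_adjugate_add_vecMulVec A (φ / p) ψ (φ / p) (ψ / pb)

/-- the Gram-type tau functions satisfy the bilinear equation
`((1/2) D_{x_1} D_{x_{-1}} − 1) τ_{nkl}·τ_{nkl} = −τ_{n+1,kl} τ_{n-1,kl}`. -/
theorem kp_bilinear_first (N : ℕ) (hN : 1 ≤ N) (n k l : ℤ)
    (p pb : Fin N → ℂ) (a b : ℂ) (xi0 xib0 : Fin N → ℂ)
    (hsum : ∀ i j : Fin N, p i + pb j ≠ 0)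
    (hp : ∀ i : Fin N, p i ≠ 0 ∧ p i ≠ a ∧ p i ≠ b)
    (hpb : ∀ j : Fin N, pb j ≠ 0 ∧ pb j ≠ -a ∧ pb j ≠ -b) :
    ∀ x1 xm1 ta tb : ℝ,
      deriv (fun u => deriv (fun v => tauf p pb a b xi0 xib0 n k l u v ta tb) xm1) x1
          * tauf p pb a b xi0 xib0 n k l x1 xm1 ta tb
        - deriv (fun u => tauf p pb a b xi0 xib0 n k l u xm1 ta tb) x1
          * deriv (fun v => tauf p pb a b xi0 xib0 n k l x1 v ta tb) xm1
        - tauf p pb a b xi0 xib0 n k l x1 xm1 ta tb ^ 2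
        = -(tauf p pb a b xi0 xib0 (n + 1) k l x1 xm1 ta tb
            * tauf p pb a b xi0 xib0 (n - 1) k l x1 xm1 ta tb) :=
  kp_bilinear_first_general N n k l p pb a b xi0 xib0 hsum hp hpb
end
end

section
/- Let φ_1, φ_2 ∈ ℝ with sin φ_1 ≠ 0, sin φ_2 ≠ 0 and sin((φ_1 + φ_2)/2) ≠ 0, and set p_j = e^{−i(φ_j + π/2)} for j = 1, 2 (so |p_j| = 1). Then for any ξ_1, ξ_2 ∈ ℂ, the 2×2 Gram determinant det [[1 + e^{ξ_1 + ξ_1*}/(p_1 + p_1*), e^{ξ_1 + ξ_2*}/(p_1 + p_2*)],[e^{ξ_2 + ξ_1*}/(p_2 + p_1*), 1 + e^{ξ_2 + ξ_2*}/(p_2 + p_2*)]] equals 1 + E_1 + E_2 + a_{12} E_1 E_2, where E_j = e^{ξ_j + ξ_j*}/(p_j + p_j*) and a_{12} = sin²((φ_2 − φ_1)/2) / sin²((φ_2 + φ_1)/2). -/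
/-!
Expanding the determinant, the coefficient of `E₁ E₂` is
`1 - (p₁ + p̄₁)(p₂ + p̄₂) / ((p₁ + p̄₂)(p₂ + p̄₁))`, which as for a Cauchy determinant equals
`(p₁ - p₂)(p̄₁ - p̄₂) / ((p₁ + p̄₂)(p₂ + p̄₁)) = |p₁ - p₂|² / |p₁ + p̄₂|²`.
Since `p_j = -(sin φ_j + i cos φ_j)` lies on the unit circle, both squared moduli are squared
chords `4 sin²(θ/2)`, with `θ = φ₂ - φ₁` and `θ = φ₁ + φ₂` respectively.
-/

open Complex ComplexConjugate

theorem det_one_add_cauchy_fin_two {K : Type*} [Field K] (u₁ u₂ v₁ v₂ p₁ p₂ q₁ q₂ : K)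
    (h₁₁ : p₁ + q₁ ≠ 0) (h₁₂ : p₁ + q₂ ≠ 0) (h₂₁ : p₂ + q₁ ≠ 0) (h₂₂ : p₂ + q₂ ≠ 0) :
    !![1 + u₁ * v₁ / (p₁ + q₁), u₁ * v₂ / (p₁ + q₂);
       u₂ * v₁ / (p₂ + q₁), 1 + u₂ * v₂ / (p₂ + q₂)].det
      = 1 + u₁ * v₁ / (p₁ + q₁) + u₂ * v₂ / (p₂ + q₂)
        + (p₁ - p₂) * (q₁ - q₂) / ((p₁ + q₂) * (p₂ + q₁))
          * (u₁ * v₁ / (p₁ + q₁)) * (u₂ * v₂ / (p₂ + q₂)) := by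
  rw [Matrix.det_fin_two_of]
  field_simp
  ring

theorem Complex.sub_mul_conj_sub_div_eq_normSq_div (p₁ p₂ : ℂ) :
    (p₁ - p₂) * (conj p₁ - conj p₂) / ((p₁ + conj p₂) * (p₂ + conj p₁))
      = ((normSq (p₁ - p₂) / normSq (p₁ + conj p₂) : ℝ) : ℂ) := by
  have hconj : p₂ + conj p₁ = conj (p₁ + conj p₂) := by simp [add_comm]
  rw [hconj, ← map_sub, mul_conj, mul_conj, ofReal_div]

theorem Real.sq_sin_add_sin_add_sq_cos_sub_cos (a b : ℝ) :
    (Real.sin a + Real.sin b) ^ 2 + (Real.cos a - Real.cos b) ^ 2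
      = 4 * Real.sin ((a + b) / 2) ^ 2 := by
  have hcos : Real.cos (2 * ((a + b) / 2))
      = Real.cos a * Real.cos b - Real.sin a * Real.sin b := by
    rw [show 2 * ((a + b) / 2) = a + b by ring, Real.cos_add]
  linear_combination Real.sin_sq_add_cos_sq a + Real.sin_sq_add_cos_sq b
    - 4 * Real.sin_sq_add_cos_sq ((a + b) / 2) + 4 * Real.cos_sq ((a + b) / 2) + 2 * hcos

theorem Real.sq_sin_sub_sin_add_sq_cos_sub_cos (a b : ℝ) :
    (Real.sin a - Real.sin b) ^ 2 + (Real.cos a - Real.cos b) ^ 2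
      = 4 * Real.sin ((a - b) / 2) ^ 2 := by
  simpa [Real.sin_neg, Real.cos_neg, sub_eq_add_neg] using
    Real.sq_sin_add_sin_add_sq_cos_sub_cos a (-b)

noncomputable def phaseParam (φ : ℝ) : ℂ :=
  Complex.exp (-(Complex.I) * ((φ : ℂ) + (Real.pi : ℂ) / 2))

theorem phaseParam_eq (φ : ℝ) :
    phaseParam φ = -((Real.sin φ : ℂ) + (Real.cos φ : ℂ) * I) := by
  rw [phaseParam,
    show -I * ((φ : ℂ) + (Real.pi : ℂ) / 2) = -((φ : ℂ) + Real.pi / 2) * I by ring,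
    exp_mul_I, Complex.cos_neg, Complex.sin_neg, Complex.cos_add_pi_div_two,
    Complex.sin_add_pi_div_two, ofReal_sin, ofReal_cos]
  ring

theorem phaseParam_re (φ : ℝ) : (phaseParam φ).re = -Real.sin φ := by
  simp [phaseParam_eq, sin_ofReal_re]

theorem phaseParam_im (φ : ℝ) : (phaseParam φ).im = -Real.cos φ := by
  simp [phaseParam_eq, cos_ofReal_re]

theorem normSq_phaseParam_sub (φ₁ φ₂ : ℝ) :
    normSq (phaseParam φ₁ - phaseParam φ₂) = 4 * Real.sin ((φ₂ - φ₁) / 2) ^ 2 := by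
  rw [normSq_apply, ← Real.sq_sin_sub_sin_add_sq_cos_sub_cos]
  simp only [sub_re, sub_im, phaseParam_re, phaseParam_im]
  ring

theorem normSq_phaseParam_add_conj (φ₁ φ₂ : ℝ) :
    normSq (phaseParam φ₁ + conj (phaseParam φ₂)) = 4 * Real.sin ((φ₁ + φ₂) / 2) ^ 2 := by
  rw [normSq_apply, ← Real.sq_sin_add_sin_add_sq_cos_sub_cos]
  simp only [add_re, add_im, conj_re, conj_im, phaseParam_re, phaseParam_im]
  ring

theorem phaseParam_add_conj_ne_zero {φ₁ φ₂ : ℝ} (h : Real.sin ((φ₁ + φ₂) / 2) ≠ 0) :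
    phaseParam φ₁ + conj (phaseParam φ₂) ≠ 0 := by
  rw [← normSq_pos, normSq_phaseParam_add_conj]
  positivity

/-- expansion of the 2×2 Gram determinant giving the two-dark-soliton tau
function, with interaction coefficient `a₁₂ = sin²((φ₂−φ₁)/2)/sin²((φ₂+φ₁)/2)`. -/
theorem two_soliton_gram_determinant (φ₁ φ₂ : ℝ)
    (hs1 : Real.sin φ₁ ≠ 0) (hs2 : Real.sin φ₂ ≠ 0)
    (hs12 : Real.sin ((φ₁ + φ₂) / 2) ≠ 0)
    (ξ₁ ξ₂ : ℂ) (p₁ p₂ : ℂ)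
    (hp1 : p₁ = Complex.exp (-(Complex.I) * ((φ₁ : ℂ) + (Real.pi : ℂ) / 2)))
    (hp2 : p₂ = Complex.exp (-(Complex.I) * ((φ₂ : ℂ) + (Real.pi : ℂ) / 2)))
    (E₁ E₂ : ℂ)
    (hE1 : E₁ = Complex.exp (ξ₁ + starRingEnd ℂ ξ₁) / (p₁ + starRingEnd ℂ p₁))
    (hE2 : E₂ = Complex.exp (ξ₂ + starRingEnd ℂ ξ₂) / (p₂ + starRingEnd ℂ p₂)) :
    Matrix.det
      !![1 + Complex.exp (ξ₁ + starRingEnd ℂ ξ₁) / (p₁ + starRingEnd ℂ p₁),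
           Complex.exp (ξ₁ + starRingEnd ℂ ξ₂) / (p₁ + starRingEnd ℂ p₂);
         Complex.exp (ξ₂ + starRingEnd ℂ ξ₁) / (p₂ + starRingEnd ℂ p₁),
           1 + Complex.exp (ξ₂ + starRingEnd ℂ ξ₂) / (p₂ + starRingEnd ℂ p₂)]
      = 1 + E₁ + E₂
        + ((Real.sin ((φ₂ - φ₁) / 2) ^ 2 / Real.sin ((φ₂ + φ₁) / 2) ^ 2 : ℝ) : ℂ)
          * E₁ * E₂ := by
  obtain rfl : p₁ = phaseParam φ₁ := hp1
  obtain rfl : p₂ = phaseParam φ₂ := hp2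
  have h₁₁ := phaseParam_add_conj_ne_zero (φ₁ := φ₁) (φ₂ := φ₁) (by rwa [add_self_div_two])
  have h₂₂ := phaseParam_add_conj_ne_zero (φ₁ := φ₂) (φ₂ := φ₂) (by rwa [add_self_div_two])
  have h₁₂ := phaseParam_add_conj_ne_zero hs12
  have h₂₁ := phaseParam_add_conj_ne_zero (φ₁ := φ₂) (φ₂ := φ₁) (by rwa [add_comm])
  subst hE1 hE2
  simp only [Complex.exp_add]
  rw [det_one_add_cauchy_fin_two _ _ _ _ _ _ _ _ h₁₁ h₁₂ h₂₁ h₂₂,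
    sub_mul_conj_sub_div_eq_normSq_div, normSq_phaseParam_sub, normSq_phaseParam_add_conj,
    add_comm φ₂ φ₁, mul_div_mul_left _ _ four_ne_zero]
end
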